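/- arXiv:2503.23435 — 4 statements merged into one kernel-verified Lean document; each statement's English description precedes it below -/
import Mathlib

section
/- (Theorem D) Let G be a finitely generated post-injunctive group and let A be a finite alphabet. Let M ⊆ G be finite and S = A^(A^M). Suppose that σ_s : A^G → A^G is stably post-surjective for some s ∈ S^G with uniformly bounded singularity. Then σ_s is stably invertible. -/
open Function Set Pointwise

section Defs

variable {G A S : Type*} [Group G]

/-- The NUCA `σ_s : A^G → A^G` determined by the configuration of local
defining maps `s ∈ S^G`, `S = A^(A^M)`:
`σ_s(x)(g) = s(g)((g⁻¹x)|_M)` where `(g⁻¹x)(h) = x(gh)`. -/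
def nuca {M : Finset G} (s : G → ((M → A) → A)) : (G → A) → (G → A) :=
  fun x g => s g fun m => x (g * (m : G))

/-- The closure, in the prodiscrete topology on `S^G`, of the shift orbit
`{gs : g ∈ G}`, where `(gs)(h) = s(g⁻¹h)`. -/
def orbitClosure (s : G → S) : Set (G → S) :=
  @closure (G → S) (@Pi.topologicalSpace G (fun _ => S) fun _ => ⊥)
    {p | ∃ g : G, p = fun h => s (g⁻¹ * h)}

/-- `τ` is a NUCA with finite memory. -/
def IsNUCAFin (τ : (G → A) → (G → A)) : Prop :=
  ∃ (M : Finset G) (s : G → ((M → A) → A)), τ = nuca s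

/-- `τ` is invertible: it is bijective and its inverse is a NUCA with finite memory. -/
def IsInvertibleNUCA (τ : (G → A) → (G → A)) : Prop :=
  Function.Bijective τ ∧ ∃ ρ : (G → A) → (G → A), IsNUCAFin ρ ∧
    Function.LeftInverse ρ τ ∧ Function.RightInverse ρ τ

/-- `σ_s` is stably injective: `σ_p` is injective for every `p ∈ Σ(s)`. -/
def StablyInjective {M : Finset G} (s : G → ((M → A) → A)) : Prop :=
  ∀ p ∈ orbitClosure s, Function.Injective (nuca p)

/-- `σ_s` is stably invertible. -/
def StablyInvertible {M : Finset G} (s : G → ((M → A) → A)) : Prop :=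
  ∃ (N : Finset G) (t : G → ((N → A) → A)),
    ∀ p ∈ orbitClosure s, ∃ q ∈ orbitClosure t,
      nuca p ∘ nuca q = id ∧ nuca q ∘ nuca p = id

/-- Two configurations are asymptotic if they agree outside a finite set. -/
def Asymptotic (x y : G → S) : Prop :=
  ∃ Ω : Finset G, ∀ g ∉ Ω, x g = y g

/-- `s` is asymptotically constant. -/
def AsymptoticallyConstant (s : G → S) : Prop :=
  ∃ c : S, Asymptotic s fun _ => c

/-- `τ` is pre-injective. -/
def PreInjective (τ : (G → A) → (G → A)) : Prop :=
  ∀ x y : G → A, Asymptotic x y → τ x = τ y → x = y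

/-- `τ` is post-surjective. -/
def PostSurjective (τ : (G → A) → (G → A)) : Prop :=
  ∀ x y : G → A, Asymptotic y (τ x) → ∃ z : G → A, Asymptotic z x ∧ τ z = y

/-- `σ_s` is stably post-surjective: `σ_p` is post-surjective for all `p ∈ Σ(s)`. -/
def StablyPostSurjective {M : Finset G} (s : G → ((M → A) → A)) : Prop :=
  ∀ p ∈ orbitClosure s, PostSurjective (nuca p)

/-- `τ` is a cellular automaton: a NUCA with finite memory and a constant
configuration of local defining maps. -/
def IsCellularAutomaton (τ : (G → A) → (G → A)) : Prop :=
  ∃ (M : Finset G) (μ : (M → A) → A), τ = nuca fun _ : G => μ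

/-- `G` is surjunctive: over every finite alphabet, injective CA are surjective. -/
def Surjunctive (G : Type*) [Group G] : Prop :=
  ∀ (B : Type) [Fintype B] (τ : (G → B) → (G → B)),
    IsCellularAutomaton τ → Function.Injective τ → Function.Surjective τ

/-- `G` is post-injunctive: over every finite alphabet, post-surjective CA are
pre-injective. -/
def PostInjunctive (G : Type*) [Group G] : Prop :=
  ∀ (B : Type) [Fintype B] (τ : (G → B) → (G → B)),
    IsCellularAutomaton τ → PostSurjective τ → PreInjective τ

/-- `s` has uniformly bounded singularity: for every finite symmetric `E ∋ 1`
there is a finite `F ⊇ E` such that `s` is constant on `FE ∖ F`. -/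
def UniformlyBoundedSingularity (s : G → S) : Prop :=
  ∀ E : Finset G, (1 : G) ∈ E → (∀ g ∈ E, g⁻¹ ∈ E) →
    ∃ F : Finset G, E ⊆ F ∧ ∃ c : S,
      ∀ g ∈ ((F : Set G) * (E : Set G)) \ (F : Set G), s g = c

end Defs


/-!
By compactness, post-surjectivity of every `σ_p`, `p ∈ Σ(s)`, is uniform: a change of `σ_p x` at a
cell `h` is the image of a change of `x` inside `hV`, for one finite `V`. With pre-injectivity this
gives injectivity of `σ_p`, and injectivity on the compact set `Σ(s)` gives a uniform memory `N` for
the inverses; their local rules depend continuously and equivariantly on `p`, so they lie in `Σ(t)`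
for `t` the inverse of `σ_s`. It remains to see that `σ_s` is pre-injective, which is clear for
finite `G`. Otherwise uniformly bounded singularity yields a constant `c ∈ Σ(s)` with `s = c` on
arbitrarily thick shells `FW ∖ F`. Then `σ_c` is a post-surjective cellular automaton, hence
pre-injective as `G` is post-injunctive, hence invertible. Replacing `s` by `c` outside a shell
around the support of a difference of two configurations gives a NUCA which, composed with
`σ_c⁻¹`, is the identity outside a finite set `Q` and onto on the patterns on `Q`; counting these
patterns rules the difference out.
-/

section Shift

variable {G S : Type*} [Group G]

/-- The configuration written `gp` in the paper. -/
def shift (g : G) (p : G → S) : G → S := fun h => p (g⁻¹ * h)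

@[simp]
lemma shift_apply (g h : G) (p : G → S) : shift g p h = p (g⁻¹ * h) := rfl

@[simp]
lemma shift_shift (g g' : G) (p : G → S) : shift g (shift g' p) = shift (g * g') p := by
  funext h; simp [mul_assoc]

@[simp]
lemma shift_one (p : G → S) : shift 1 p = p := by
  funext h; simp

lemma shift_injective (g : G) : Injective (shift g : (G → S) → G → S) :=
  fun p q h => by simpa using congrArg (shift g⁻¹) h

lemma Asymptotic.shift {x y : G → S} (hxy : Asymptotic x y) (g : G) :
    Asymptotic (shift g x) (shift g y) := by
  classical
  obtain ⟨Ω, hΩ⟩ := hxy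
  exact ⟨Ω.image (g * ·), fun h hh => hΩ _ fun hc => hh (Finset.mem_image.mpr ⟨_, hc, by simp⟩)⟩

lemma mem_orbitClosure_iff {s p : G → S} :
    p ∈ orbitClosure s ↔ ∀ W : Finset G, ∃ g : G, ∀ h ∈ W, p h = s (g⁻¹ * h) := by
  let _ : TopologicalSpace S := ⊥
  have _ : DiscreteTopology S := ⟨rfl⟩
  constructor
  · intro hp W
    have hopen : IsOpen ((W : Set G).pi fun h => {p h}) :=
      isOpen_set_pi W.finite_toSet fun _ _ => isOpen_discrete _
    obtain ⟨q, hq, g, rfl⟩ := mem_closure_iff.mp hp _ hopen fun h _ => rfl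
    exact ⟨g, fun h hh => (hq h hh).symm⟩
  · intro H
    refine mem_closure_iff.mpr fun o ho hpo => ?_
    obtain ⟨I, u, hu, hIu⟩ := isOpen_pi_iff.mp ho p hpo
    obtain ⟨g, hg⟩ := H I
    exact ⟨_, hIu fun h hh => hg h hh ▸ (hu h hh).2, g, rfl⟩

lemma self_mem_orbitClosure (s : G → S) : s ∈ orbitClosure s :=
  mem_orbitClosure_iff.mpr fun _ => ⟨1, by simp⟩

lemma shift_mem_orbitClosure {s p : G → S} (hp : p ∈ orbitClosure s) (g : G) :
    shift g p ∈ orbitClosure s := by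
  classical
  refine mem_orbitClosure_iff.mpr fun W => ?_
  obtain ⟨g', hg'⟩ := mem_orbitClosure_iff.mp hp (W.image (g⁻¹ * ·))
  exact ⟨g * g', fun h hh => by simpa [mul_assoc] using hg' _ (Finset.mem_image_of_mem _ hh)⟩

lemma eq_of_mem_orbitClosure_const {c : S} {p : G → S} (hp : p ∈ orbitClosure fun _ : G => c) :
    p = fun _ => c :=
  funext fun h => by simpa using (mem_orbitClosure_iff.mp hp {h}).choose_spec h (by simp)

end Shift

section Nuca

variable {G A : Type*} [Group G] {M : Finset G}

lemma nuca_apply_congr {p p' : G → (M → A) → A} {x x' : G → A} {g : G} (hp : p g = p' g)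
    (hx : ∀ m ∈ M, x (g * m) = x' (g * m)) : nuca p x g = nuca p' x' g := by
  simp only [nuca, hp]
  congr 1
  exact funext fun m => hx m m.2

lemma nuca_shift (p : G → (M → A) → A) (g : G) (x : G → A) :
    nuca (shift g p) x = shift g (nuca p (shift g⁻¹ x)) := by
  funext h
  simp [nuca, mul_assoc]

lemma mem_mul_inv_of_mul_mem [DecidableEq G] {D : Finset G} {g m : G} (hgm : g * m ∈ D)
    (hm : m ∈ M) : g ∈ D * M⁻¹ := by
  simpa using Finset.mul_mem_mul hgm (Finset.inv_mem_inv hm)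

end Nuca

section UltrafilterLimit

open Filter

variable {ι α G : Type*} [Finite α] (U : Ultrafilter ι)

/-- The `U`-limit of a family in a finite type: the value taken `U`-almost always. -/
noncomputable def ulim (f : ι → α) : α := (U.map f).eq_pure_of_finite.choose

lemma eventually_eq_ulim (f : ι → α) : ∀ᶠ i in U, f i = ulim U f := by
  have h : {ulim U f} ∈ U.map f := by
    rw [(U.map f).eq_pure_of_finite.choose_spec]
    exact Set.mem_singleton _
  exact h

lemma ulim_const (a : α) : ulim U (fun _ => a) = a :=
  (eventually_eq_ulim U fun _ => a).exists.choose_spec.symm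

noncomputable def cellLim (f : ι → G → α) : G → α := fun g => ulim U fun i => f i g

@[simp]
lemma cellLim_const (x : G → α) : cellLim U (fun _ => x) = x :=
  funext fun g => ulim_const U (x g)

lemma eventually_eqOn_cellLim (f : ι → G → α) (W : Finset G) :
    ∀ᶠ i in U, ∀ g ∈ W, f i g = cellLim U f g :=
  (eventually_all_finset W).mpr fun g _ => eventually_eq_ulim U fun i => f i g

lemma cellLim_mem_orbitClosure [Group G] {s : G → α} {P : ι → G → α}
    (hP : ∀ i, P i ∈ orbitClosure s) : cellLim U P ∈ orbitClosure s := by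
  refine mem_orbitClosure_iff.mpr fun W => ?_
  obtain ⟨i, hi⟩ := (eventually_eqOn_cellLim U P W).exists
  obtain ⟨g, hg⟩ := mem_orbitClosure_iff.mp (hP i) W
  exact ⟨g, fun h hh => (hi h hh).symm.trans (hg h hh)⟩

lemma eventually_nuca_cellLim [Group G] {A : Type*} [Finite A] {M : Finset G}
    (P : ι → G → (M → A) → A) (X : ι → G → A) (g : G) :
    ∀ᶠ i in U, nuca (P i) (X i) g = nuca (cellLim U P) (cellLim U X) g := by
  classical
  filter_upwards [eventually_eqOn_cellLim U P {g}, eventually_eqOn_cellLim U X (M.image (g * ·))]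
    with i hP hX
  exact nuca_apply_congr (hP g (by simp)) fun m hm => hX _ (Finset.mem_image_of_mem _ hm)

noncomputable abbrev finsetUltrafilter (G : Type*) : Ultrafilter (Finset G) := .of atTop

lemma eventually_superset_finsetUltrafilter (W₀ : Finset G) :
    ∀ᶠ W in finsetUltrafilter G, W₀ ⊆ W :=
  Ultrafilter.of_le _ (eventually_ge_atTop W₀)

end UltrafilterLimit

section LocalCorrections

variable {G A : Type*} [Group G] {M : Finset G}

def HasLocalCorrectionsAt (τ : (G → A) → G → A) (V : Finset G) (h : G) : Prop :=
  ∀ x y : G → A, (∀ g ≠ h, y g = τ x g) → ∃ z, (∀ g, h⁻¹ * g ∉ V → z g = x g) ∧ τ z = y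

def HasLocalCorrections (τ : (G → A) → G → A) (V : Finset G) : Prop :=
  ∀ h, HasLocalCorrectionsAt τ V h

lemma HasLocalCorrections.exists_eq_of_eq_outside {τ : (G → A) → G → A} {V : Finset G}
    (hτ : HasLocalCorrections τ V) (Ω : Finset G) {x y : G → A} (hy : ∀ g ∉ Ω, y g = τ x g) :
    ∃ z, (∀ g, (∀ ω ∈ Ω, ω⁻¹ * g ∉ V) → z g = x g) ∧ τ z = y := by
  classical
  induction Ω using Finset.induction generalizing y with
  | empty => exact ⟨x, fun _ _ => rfl, funext fun g => (hy g (Finset.notMem_empty g)).symm⟩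
  | @insert a Ω ha ih =>
    obtain ⟨z₁, hz₁x, hz₁⟩ := ih (y := Function.update y a (τ x a)) fun g hg => by
      rcases eq_or_ne g a with rfl | hga
      · simp
      · simpa [hga] using hy g (by simp [hga, hg])
    obtain ⟨z, hzz₁, hz⟩ := hτ a z₁ y fun g hga => by simp [hz₁, hga]
    refine ⟨z, fun g hg => ?_, hz⟩
    rw [hzz₁ g (hg a (Finset.mem_insert_self a Ω)),
      hz₁x g fun ω hω => hg ω (Finset.mem_insert_of_mem hω)]

lemma HasLocalCorrections.postSurjective {τ : (G → A) → G → A} {V : Finset G}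
    (hτ : HasLocalCorrections τ V) : PostSurjective τ := by
  classical
  rintro x y ⟨Ω, hΩ⟩
  obtain ⟨z, hzx, hz⟩ := hτ.exists_eq_of_eq_outside Ω hΩ
  refine ⟨z, ⟨Ω * V, fun g hg => hzx g fun ω hω hωg => hg ?_⟩, hz⟩
  simpa using Finset.mul_mem_mul hω hωg

lemma HasLocalCorrectionsAt.translate {p : G → (M → A) → A} {V : Finset G} {h : G}
    (hp : HasLocalCorrectionsAt (nuca p) V h) (g : G) :
    HasLocalCorrectionsAt (nuca (shift g p)) V (g * h) := by
  intro x y hy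
  obtain ⟨z, hzx, hz⟩ := hp (shift g⁻¹ x) (shift g⁻¹ y) fun k hk => by
    simpa [nuca_shift] using hy (g * k) (by simpa using hk)
  refine ⟨shift g z, fun k hk => by simpa using hzx (g⁻¹ * k) (by simpa [mul_assoc] using hk), ?_⟩
  simp [nuca_shift, hz]

lemma HasLocalCorrectionsAt.of_eqOn {p q : G → (M → A) → A} {V : Finset G} {K : Set G} {h : G}
    (hp : HasLocalCorrectionsAt (nuca p) V h) (h1K : 1 ∈ K)
    (hVMK : ∀ v ∈ V, ∀ m ∈ M, v * m⁻¹ ∈ K) (hqp : ∀ k ∈ K, q (h * k) = p (h * k)) :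
    HasLocalCorrectionsAt (nuca q) V h := by
  classical
  intro x y hy
  obtain ⟨z, hzx, hz⟩ := hp x (Function.update (nuca p x) h (y h)) fun g hg => by simp [hg]
  refine ⟨z, hzx, funext fun g => ?_⟩
  by_cases hg : h⁻¹ * g ∈ K
  · have hqg : q g = p g := by simpa using hqp _ hg
    rw [nuca_apply_congr hqg fun _ _ => rfl, hz]
    rcases eq_or_ne g h with rfl | hgh
    · simp
    · rw [Function.update_of_ne hgh, hy g hgh]
      exact nuca_apply_congr hqg.symm fun _ _ => rfl
  · have hgh : g ≠ h := by rintro rfl; simp_all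
    rw [hy g hgh]
    refine nuca_apply_congr rfl fun m hm => hzx _ fun hv => hg ?_
    simpa [mul_assoc] using hVMK _ hv m hm

lemma hasLocalCorrections_of_eqOn {p p' q : G → (M → A) → A} {V : Finset G} {K R : Set G}
    (hp : HasLocalCorrections (nuca p) V) (hp' : HasLocalCorrections (nuca p') V)
    (h1K : 1 ∈ K) (hKinv : ∀ k ∈ K, k⁻¹ ∈ K) (hVMK : ∀ v ∈ V, ∀ m ∈ M, v * m⁻¹ ∈ K)
    (hqp : EqOn q p (R * K * K)) (hqp' : EqOn q p' Rᶜ) : HasLocalCorrections (nuca q) V := by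
  intro h
  by_cases hh : h ∈ R * K
  · exact (hp h).of_eqOn h1K hVMK fun k hk => hqp (Set.mul_mem_mul hh hk)
  · refine (hp' h).of_eqOn h1K hVMK fun k hk => hqp' fun hhk => hh ?_
    simpa using Set.mul_mem_mul hhk (hKinv k hk)

variable [Finite A]

lemma exists_hasLocalCorrectionsAt_one {s : G → (M → A) → A} (hs : StablyPostSurjective s) :
    ∃ V : Finset G, ∀ p ∈ orbitClosure s, HasLocalCorrectionsAt (nuca p) V 1 := by
  classical
  -- Counterexamples for larger and larger `V` have a limit in `Σ(s)`; a correction for the limit,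
  -- given by post-surjectivity, transplants to the counterexamples.
  by_contra! hno
  simp only [HasLocalCorrectionsAt, not_forall, inv_one, one_mul, exists_prop] at hno
  choose P hP X Y hXY hfail using hno
  set U := finsetUltrafilter G
  have hp : cellLim U P ∈ orbitClosure s := cellLim_mem_orbitClosure U hP
  have hy : ∀ g ≠ 1, cellLim U Y g = nuca (cellLim U P) (cellLim U X) g := fun g hg => by
    obtain ⟨W, hYW, hnuca⟩ :=
      ((eventually_eqOn_cellLim U Y {g}).and (eventually_nuca_cellLim U P X g)).exists
    rw [← hYW g (Finset.mem_singleton_self g), hXY W g hg, hnuca]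
  obtain ⟨z, ⟨Ω, hzx⟩, hz⟩ :=
    hs _ hp _ _ ⟨{1}, fun g hg => hy g (by simpa using hg)⟩
  set R := insert 1 (Ω * M⁻¹)
  obtain ⟨W, hΩW, hPW, hXW, hYW⟩ := ((eventually_superset_finsetUltrafilter Ω).and
    ((eventually_eqOn_cellLim U P R).and ((eventually_eqOn_cellLim U X (R * M)).and
      (eventually_eqOn_cellLim U Y R)))).exists
  refine hfail W ⟨Ω.piecewise z (X W),
    fun g hg => Finset.piecewise_eq_of_notMem _ _ _ fun h => hg (hΩW h), funext fun g => ?_⟩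
  by_cases hgR : g ∈ R
  · calc nuca (P W) (Ω.piecewise z (X W)) g = nuca (cellLim U P) z g := by
          refine nuca_apply_congr (hPW g hgR) fun m hm => ?_
          by_cases hgm : g * m ∈ Ω
          · simp [hgm]
          · rw [Finset.piecewise_eq_of_notMem _ _ _ hgm, hXW _ (Finset.mul_mem_mul hgR hm),
              hzx _ hgm]
      _ = Y W g := by rw [hz, hYW g hgR]
  · have hg1 : g ≠ 1 := by rintro rfl; exact hgR (Finset.mem_insert_self 1 _)
    rw [hXY W g hg1]
    exact nuca_apply_congr rfl fun m hm => Finset.piecewise_eq_of_notMem _ _ _ fun h =>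
      hgR (Finset.mem_insert_of_mem (mem_mul_inv_of_mul_mem h hm))

lemma exists_hasLocalCorrections {s : G → (M → A) → A} (hs : StablyPostSurjective s) :
    ∃ V : Finset G, ∀ p ∈ orbitClosure s, HasLocalCorrections (nuca p) V := by
  obtain ⟨V, hV⟩ := exists_hasLocalCorrectionsAt_one hs
  refine ⟨V, fun p hp h => ?_⟩
  simpa using (hV _ (shift_mem_orbitClosure hp h⁻¹)).translate h

end LocalCorrections

section Injectivity

variable {G A : Type*} [Group G] {M : Finset G}

lemma injective_of_preInjective {p : G → (M → A) → A} {V : Finset G}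
    (hp : HasLocalCorrections (nuca p) V) (hpre : PreInjective (nuca p)) :
    Injective (nuca p) := by
  classical
  intro x x' hxx'
  funext g₀
  -- Glue `x'` on `B` to `x` outside: the image changes only on the boundary `bd` of `B`, where
  -- it can be corrected without touching `g₀`, and pre-injectivity forces the result to be `x`.
  set B := insert g₀ ({g₀} * V⁻¹ * M)
  set bd := (B * M⁻¹).filter fun b => ¬ ∀ m ∈ M, b * m ∈ B
  obtain ⟨u, hu_supp, hu⟩ := hp.exists_eq_of_eq_outside bd (x := B.piecewise x' x) (y := nuca p x)
    fun g hg => by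
      by_cases hgB : ∀ m ∈ M, g * m ∈ B
      · rw [hxx']
        exact nuca_apply_congr rfl fun m hm => (B.piecewise_eq_of_mem _ _ (hgB m hm)).symm
      · refine nuca_apply_congr rfl fun m hm => (B.piecewise_eq_of_notMem _ _ fun h => hg ?_).symm
        exact Finset.mem_filter.mpr ⟨mem_mul_inv_of_mul_mem h hm, hgB⟩
  have hg₀ : ∀ b ∈ bd, b⁻¹ * g₀ ∉ V := fun b hb hv => (Finset.mem_filter.mp hb).2 fun m hm => by
    refine Finset.mem_insert_of_mem ?_
    simpa [mul_assoc] using Finset.mul_mem_mul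
      (Finset.mul_mem_mul (Finset.mem_singleton_self g₀) (Finset.inv_mem_inv hv)) hm
  have hux : u = x := by
    refine hpre u x ⟨B ∪ bd * V, fun g hg => ?_⟩ hu
    rw [hu_supp g fun b hb hv =>
      hg (Finset.mem_union_right _ (by simpa using Finset.mul_mem_mul hb hv))]
    exact B.piecewise_eq_of_notMem _ _ fun h => hg (Finset.mem_union_left _ h)
  rw [← hux, hu_supp g₀ hg₀]
  exact B.piecewise_eq_of_mem _ _ (Finset.mem_insert_self _ _)

lemma PreInjective.of_mem_orbitClosure {s p : G → (M → A) → A} (hs : PreInjective (nuca s))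
    (hp : p ∈ orbitClosure s) : PreInjective (nuca p) := by
  classical
  rintro x x' ⟨Ω, hΩ⟩ hxx'
  obtain ⟨g, hg⟩ := mem_orbitClosure_iff.mp hp (Ω * M⁻¹)
  have hshift : nuca (shift g s) x = nuca (shift g s) x' := funext fun h => by
    by_cases hh : h ∈ Ω * M⁻¹
    · calc nuca (shift g s) x h = nuca p x h := nuca_apply_congr (hg h hh).symm fun _ _ => rfl
        _ = nuca p x' h := congrFun hxx' h
        _ = nuca (shift g s) x' h := nuca_apply_congr (hg h hh) fun _ _ => rfl
    · exact nuca_apply_congr rfl fun m hm => hΩ _ fun h' => hh (mem_mul_inv_of_mul_mem h' hm)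
  rw [nuca_shift, nuca_shift] at hshift
  simpa using congrArg (shift g) (hs _ _ (Asymptotic.shift ⟨Ω, hΩ⟩ g⁻¹) (shift_injective g hshift))

lemma PostSurjective.surjective [Finite A] {p : G → (M → A) → A}
    (hp : PostSurjective (nuca p)) : Surjective (nuca p) := by
  classical
  intro y
  choose z _ hzy using fun W : Finset G =>
    hp y (W.piecewise y (nuca p y)) ⟨W, fun g hg => W.piecewise_eq_of_notMem _ _ hg⟩
  set U := finsetUltrafilter G
  refine ⟨cellLim U z, funext fun g => ?_⟩
  obtain ⟨W, hgW, hW⟩ := ((eventually_superset_finsetUltrafilter {g}).and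
    (eventually_nuca_cellLim U (fun _ => p) z g)).exists
  rw [cellLim_const] at hW
  rw [← hW, hzy W]
  exact W.piecewise_eq_of_mem _ _ (hgW (Finset.mem_singleton_self g))

end Injectivity

section LocalInverse

variable {G A : Type*} [Group G] {M : Finset G}

def IsInverseMemory (p : G → (M → A) → A) (N : Finset G) : Prop :=
  ∀ (g : G) (x x' : G → A), (∀ ν ∈ N, nuca p x (g * ν) = nuca p x' (g * ν)) → x g = x' g

lemma exists_inverseMemory_one [Finite A] {s : G → (M → A) → A} (hs : StablyInjective s) :
    ∃ N : Finset G, ∀ p ∈ orbitClosure s, ∀ x x' : G → A,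
      (∀ ν ∈ N, nuca p x ν = nuca p x' ν) → x 1 = x' 1 := by
  by_contra! hno
  choose P hP X X' hXX' hne using hno
  set U := finsetUltrafilter G
  have hlim : nuca (cellLim U P) (cellLim U X) = nuca (cellLim U P) (cellLim U X') :=
    funext fun g => by
      obtain ⟨W, hgW, hX, hX'⟩ := ((eventually_superset_finsetUltrafilter {g}).and
        ((eventually_nuca_cellLim U P X g).and (eventually_nuca_cellLim U P X' g))).exists
      rw [← hX, ← hX', hXX' W g (hgW (Finset.mem_singleton_self g))]
  have h1 := congrFun (hs _ (cellLim_mem_orbitClosure U hP) hlim) 1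
  obtain ⟨W, hX, hX'⟩ :=
    ((eventually_eqOn_cellLim U X {1}).and (eventually_eqOn_cellLim U X' {1})).exists
  exact hne W (by rw [hX 1 (Finset.mem_singleton_self 1), hX' 1 (Finset.mem_singleton_self 1), h1])

lemma exists_inverseMemory [Finite A] {s : G → (M → A) → A} (hs : StablyInjective s) :
    ∃ N : Finset G, ∀ p ∈ orbitClosure s, IsInverseMemory p N := by
  obtain ⟨N, hN⟩ := exists_inverseMemory_one hs
  refine ⟨N, fun p hp g x x' hxx' => ?_⟩
  simpa using hN _ (shift_mem_orbitClosure hp g⁻¹) (shift g⁻¹ x) (shift g⁻¹ x') fun ν hν => by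
    simpa [nuca_shift] using hxx' ν hν

open Classical in
/-- The local rules of the inverse of `σ_p`; `a₀` is a junk value on patterns that `σ_p` never
shows around `g`. -/
noncomputable def localInverse (p : G → (M → A) → A) (N : Finset G) (a₀ : A) :
    G → (N → A) → A :=
  fun g u => if h : ∃ x : G → A, ∀ ν : N, nuca p x (g * ν) = u ν then h.choose g else a₀

lemma localInverse_nuca {p : G → (M → A) → A} {N : Finset G} (hN : IsInverseMemory p N)
    (a₀ : A) (x : G → A) : nuca (localInverse p N a₀) (nuca p x) = x := by
  funext g
  have h : ∃ x' : G → A, ∀ ν : N, nuca p x' (g * ν) = nuca p x (g * ν) := ⟨x, fun _ => rfl⟩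
  change localInverse p N a₀ g (fun ν => nuca p x (g * ν)) = x g
  rw [localInverse, dif_pos h]
  exact hN g _ _ fun ν hν => h.choose_spec ⟨ν, hν⟩

lemma localInverse_apply_eq {p p' : G → (M → A) → A} {N : Finset G}
    (hp' : IsInverseMemory p' N) (a₀ : A) {g g' : G} (hpp' : ∀ ν ∈ N, p (g * ν) = p' (g' * ν)) :
    localInverse p N a₀ g = localInverse p' N a₀ g' := by
  have key : ∀ (x : G → A) (ν : N),
      nuca p' (fun k => x (g * g'⁻¹ * k)) (g' * ν) = nuca p x (g * ν) := fun x ν => by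
    simp only [nuca, hpp' ν ν.2, mul_assoc, inv_mul_cancel_left]
  funext u
  by_cases h : ∃ x : G → A, ∀ ν : N, nuca p x (g * ν) = u ν
  · have h' : ∃ x : G → A, ∀ ν : N, nuca p' x (g' * ν) = u ν :=
      ⟨_, fun ν => (key _ ν).trans (h.choose_spec ν)⟩
    rw [localInverse, localInverse, dif_pos h, dif_pos h']
    simpa using hp' g' _ _ fun ν hν =>
      (key _ ⟨ν, hν⟩).trans ((h.choose_spec _).trans (h'.choose_spec _).symm)
  · have h' : ¬ ∃ x : G → A, ∀ ν : N, nuca p' x (g' * ν) = u ν := fun ⟨x, hx⟩ =>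
      h ⟨fun k => x (g' * g⁻¹ * k), fun ν => by rw [← key]; simpa [mul_assoc] using hx ν⟩
    rw [localInverse, localInverse, dif_neg h, dif_neg h']

lemma localInverse_mem_orbitClosure {s p : G → (M → A) → A} {N : Finset G}
    (hs : IsInverseMemory s N) (hp : p ∈ orbitClosure s) (a₀ : A) :
    localInverse p N a₀ ∈ orbitClosure (localInverse s N a₀) := by
  classical
  refine mem_orbitClosure_iff.mpr fun W => ?_
  obtain ⟨g, hg⟩ := mem_orbitClosure_iff.mp hp (W * N)
  exact ⟨g, fun h hh => localInverse_apply_eq hs a₀ fun ν hν => by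
    simpa [mul_assoc] using hg _ (Finset.mul_mem_mul hh hν)⟩

theorem stablyInvertible_of_bijective [Finite A] {s : G → (M → A) → A}
    (hs : ∀ p ∈ orbitClosure s, Bijective (nuca p)) : StablyInvertible s := by
  rcases isEmpty_or_nonempty A with hA | ⟨⟨a₀⟩⟩
  · exact ⟨M, s, fun p hp => ⟨p, hp, funext isEmptyElim, funext isEmptyElim⟩⟩
  obtain ⟨N, hN⟩ := exists_inverseMemory fun p hp => (hs p hp).injective
  refine ⟨N, localInverse s N a₀, fun p hp => ⟨localInverse p N a₀,
    localInverse_mem_orbitClosure (hN s (self_mem_orbitClosure s)) hp a₀,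
    funext fun y => ?_, funext (localInverse_nuca (hN p hp) a₀)⟩⟩
  obtain ⟨x, rfl⟩ := (hs p hp).surjective y
  simp [localInverse_nuca (hN p hp)]

end LocalInverse

lemma injOn_of_surjective_of_eq_outside {G A : Type*} [Finite A] {Φ : (G → A) → G → A}
    {Q : Finset G} {x : G → A} (hΦ : ∀ z, ∀ g ∉ Q, Φ z g = z g)
    (hsurj : ∀ y, (∀ g ∉ Q, y g = x g) → ∃ z, Φ z = y) :
    InjOn Φ {z | ∀ g ∉ Q, z g = x g} := by
  have hfin : {z : G → A | ∀ g ∉ Q, z g = x g}.Finite := by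
    refine Set.Finite.of_finite_image (f := fun z (g : Q) => z g) (Set.toFinite _)
      fun z hz z' hz' h => funext fun g => ?_
    by_cases hg : g ∈ Q
    · exact congrFun h ⟨g, hg⟩
    · rw [hz g hg, hz' g hg]
  refine ((hfin.surjOn_iff_bijOn_of_mapsTo fun z hz g hg => (hΦ z g hg).trans (hz g hg)).mp
    fun y hy => ?_).injOn
  obtain ⟨z, rfl⟩ := hsurj y hy
  exact ⟨z, fun g hg => (hΦ z g hg).symm.trans (hy g hg), rfl⟩

section Shells

variable {G : Type*} [Group G]

def AgreesOnShells {S : Type*} (s c : G → S) : Prop :=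
  ∀ W : Finset G, ∃ F : Finset G, W ⊆ F ∧ ∀ g ∈ ((F : Set G) * W) \ F, s g = c g

lemma exists_symmetric_superset (T : Finset G) :
    ∃ K : Finset G, T ⊆ K ∧ 1 ∈ K ∧ ∀ k ∈ K, k⁻¹ ∈ K := by
  classical
  refine ⟨insert 1 (T ∪ T⁻¹), fun t ht => by simp [ht], by simp, fun k hk => ?_⟩
  simp only [Finset.mem_insert, Finset.mem_union, Finset.mem_inv', inv_inv, inv_eq_one] at hk ⊢
  tauto

lemma exists_finset_forall_mem_pow [Group.FG G] [DecidableEq G] :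
    ∃ E : Finset G, ∀ g : G, ∃ n, g ∈ E ^ n := by
  obtain ⟨S, hS⟩ := Group.FG.out (G := G)
  refine ⟨insert 1 (S ∪ S⁻¹), fun g => ?_⟩
  induction (hS ▸ Subgroup.mem_top g : g ∈ Subgroup.closure (S : Set G)) using
    Subgroup.closure_induction'' with
  | mem x hx => exact ⟨1, by simp_all [Finset.mem_inv']⟩
  | inv_mem x hx => exact ⟨1, by simp_all [Finset.mem_inv']⟩
  | one => exact ⟨0, by simp⟩
  | mul x y _ _ hx hy =>
    obtain ⟨m, hm⟩ := hx
    obtain ⟨n, hn⟩ := hy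
    exact ⟨m + n, pow_add (insert 1 (S ∪ S⁻¹)) m n ▸ Finset.mul_mem_mul hm hn⟩

lemma exists_translate_subset_shell [Group.FG G] [Infinite G] (W : Finset G) :
    ∃ L : Finset G, ∀ F : Finset G, F.Nonempty →
      ∃ h : G, ∀ w ∈ W, h * w ∈ ((F : Set G) * L) \ F := by
  classical
  obtain ⟨E, hE⟩ := exists_finset_forall_mem_pow (G := G)
  obtain ⟨K, hEWK, h1K, hKinv⟩ := exists_symmetric_superset (E ∪ W)
  refine ⟨K * K * K, fun F ⟨f, hf⟩ => ?_⟩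
  -- `FK` is not stable under right multiplication by `K`, as `K` generates the infinite group `G`
  obtain ⟨h, hh, hhK⟩ : ∃ h ∈ F * K * K, h ∉ F * K := by
    by_contra! hstab
    have hpow : ∀ n, F * K ^ n ⊆ F * K := by
      intro n
      induction n with
      | zero => simpa using Finset.subset_mul_left F h1K
      | succ n ih =>
        rw [pow_succ, ← mul_assoc]
        exact fun g hg => hstab g (Finset.mul_subset_mul_right ih hg)
    obtain ⟨g, hg⟩ := Infinite.exists_notMem_finset (F * K)
    obtain ⟨n, hn⟩ := hE (f⁻¹ * g)
    refine hg (hpow n ?_)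
    simpa using Finset.mul_mem_mul hf
      (Finset.pow_subset_pow_left (Finset.union_subset_left hEWK) hn)
  refine ⟨h, fun w hw => ⟨?_, fun hF => hhK ?_⟩⟩
  · rw [← Finset.coe_mul, Finset.mem_coe]
    simp only [← mul_assoc]
    exact Finset.mul_mem_mul hh (Finset.union_subset_right hEWK hw)
  · simpa using Finset.mul_mem_mul hF (hKinv w (Finset.union_subset_right hEWK hw))

lemma exists_const_mem_orbitClosure_agreesOnShells [Group.FG G] [Infinite G] {S : Type*}
    [Finite S] {s : G → S} (hs : UniformlyBoundedSingularity s) :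
    ∃ c : S, (fun _ => c) ∈ orbitClosure s ∧ AgreesOnShells s fun _ => c := by
  choose K hK h1K hKinv using exists_symmetric_superset (G := G)
  choose F hKF c hc using fun W => hs (K W) (h1K W) (hKinv W)
  -- the constant is the `U`-limit of the constants `c W` given by larger and larger `W`
  set U := finsetUltrafilter G
  have key : ∀ W₀ : Finset G, ∃ W, 1 ∈ F W ∧ W₀ ⊆ F W ∧
      ∀ g ∈ ((F W : Set G) * W₀) \ F W, s g = ulim U c := fun W₀ => by
    obtain ⟨W, hW₀W, hcW⟩ :=
      ((eventually_superset_finsetUltrafilter W₀).and (eventually_eq_ulim U c)).exists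
    refine ⟨W, hKF W (h1K W), (hW₀W.trans (hK W)).trans (hKF W), fun g hg => ?_⟩
    rw [← hcW]
    exact hc W g ⟨Set.mul_subset_mul_left (by simpa using hW₀W.trans (hK W)) hg.1, hg.2⟩
  refine ⟨ulim U c, mem_orbitClosure_iff.mpr fun W₀ => ?_, fun W₀ => ?_⟩
  · obtain ⟨L, hL⟩ := exists_translate_subset_shell W₀
    obtain ⟨W, h1W, hLW, hsW⟩ := key L
    obtain ⟨h, hh⟩ := hL (F W) ⟨1, h1W⟩
    exact ⟨h⁻¹, fun w hw => by simpa using (hsW _ (hh w hw)).symm⟩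
  · obtain ⟨W, -, hW₀W, hsW⟩ := key W₀
    exact ⟨F W, hW₀W, hsW⟩

variable {A : Type*} {M : Finset G}

theorem preInjective_of_agreesOnShells [Finite A] {s c : G → (M → A) → A} {N : Finset G}
    {t : G → (N → A) → A} (hsc : AgreesOnShells s c) (hct : nuca c ∘ nuca t = id)
    (htc : nuca t ∘ nuca c = id) {V : Finset G} (hs : HasLocalCorrections (nuca s) V)
    (hc : HasLocalCorrections (nuca c) V) : PreInjective (nuca s) := by
  classical
  rintro x x' ⟨D, hD⟩ hxx'
  obtain ⟨K, hVMNK, h1K, hKinv⟩ := exists_symmetric_superset (V * M⁻¹ ∪ N)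
  obtain ⟨F, hF, hsF⟩ := hsc (D ∪ D * M⁻¹ ∪ K * K * K)
  -- `σ_t ∘ σ_sh` fixes every cell outside `Q` and maps the patterns on `Q` onto themselves, hence
  -- injectively, whereas it identifies `x` and `x'`.
  set sh := (F * K).piecewise s c
  have hsh_c : EqOn sh c (↑(F * K))ᶜ := fun g hg => Finset.piecewise_eq_of_notMem _ _ _ hg
  have hsh_s : EqOn sh s (↑(F * K) * ↑K * ↑K) := fun g hg => by
    rw [← Finset.coe_mul, ← Finset.coe_mul, Finset.mem_coe] at hg
    by_cases hgFK : g ∈ F * K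
    · exact Finset.piecewise_eq_of_mem _ _ _ hgFK
    · rw [hsh_c hgFK]
      refine (hsF g ⟨?_, fun hgF => hgFK (Finset.subset_mul_left F h1K hgF)⟩).symm
      rw [← Finset.coe_mul, Finset.mem_coe]
      exact Finset.mul_subset_mul_left Finset.subset_union_right
        (by simpa only [mul_assoc] using hg)
  have hVMK : ∀ v ∈ V, ∀ m ∈ M, v * m⁻¹ ∈ (K : Set G) := fun v hv m hm =>
    hVMNK (Finset.mem_union_left _ (Finset.mul_mem_mul hv (Finset.inv_mem_inv hm)))
  have hsh : PostSurjective (nuca sh) :=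
    (hasLocalCorrections_of_eqOn hs hc h1K hKinv hVMK hsh_s hsh_c).postSurjective
  set Q := F * K * K
  have hΦ : ∀ z, ∀ g ∉ Q, nuca t (nuca sh z) g = z g := fun z g hg => by
    calc nuca t (nuca sh z) g = nuca t (nuca c z) g :=
          nuca_apply_congr rfl fun ν hν => nuca_apply_congr (hsh_c fun h => hg ?_) fun _ _ => rfl
      _ = z g := congrFun (congrFun htc z) g
    simpa using Finset.mul_mem_mul (Finset.mem_coe.mp h)
      (hKinv ν (hVMNK (Finset.mem_union_right _ hν)))
  refine injOn_of_surjective_of_eq_outside hΦ (fun y hy => ?_) (fun _ _ => rfl)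
    (fun g hg => (hD g fun h => hg ?_).symm) ?_
  · have hasym : Asymptotic (nuca c y) (nuca sh x) := ⟨Q * M⁻¹, fun g hg => by
      calc nuca c y g = nuca c (nuca t (nuca sh x)) g := nuca_apply_congr rfl fun m hm => by
            have hgm : g * m ∉ Q := fun h => hg (mem_mul_inv_of_mul_mem h hm)
            exact (hy _ hgm).trans (hΦ x _ hgm).symm
        _ = nuca sh x g := congrFun (congrFun hct _) g⟩
    obtain ⟨z, -, hz⟩ := hsh x (nuca c y) hasym
    exact ⟨z, by rw [hz]; exact congrFun htc y⟩
  · exact (Finset.subset_mul_left _ h1K).trans (Finset.subset_mul_left _ h1K) (hF (by simp [h]))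
  · show nuca t (nuca sh x) = nuca t (nuca sh x')
    congr 1
    funext g
    by_cases hg : g ∈ D * M⁻¹
    · have hshg : sh g = s g :=
        Finset.piecewise_eq_of_mem _ _ _ (Finset.subset_mul_left F h1K (hF (by simp [hg])))
      calc nuca sh x g = nuca s x g := nuca_apply_congr hshg fun _ _ => rfl
        _ = nuca s x' g := congrFun hxx' g
        _ = nuca sh x' g := nuca_apply_congr hshg.symm fun _ _ => rfl
    · exact nuca_apply_congr rfl fun m hm => hD _ fun h => hg (mem_mul_inv_of_mul_mem h hm)

end Shells

section AlphabetChange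

variable {G A B : Type*}

lemma Asymptotic.comp {x y : G → A} (hxy : Asymptotic x y) (e : A → B) :
    Asymptotic (e ∘ x) (e ∘ y) :=
  let ⟨Ω, hΩ⟩ := hxy
  ⟨Ω, fun g hg => congrArg e (hΩ g hg)⟩

lemma PostSurjective.equivConj {τ : (G → A) → G → A} (hτ : PostSurjective τ) (e : A ≃ B) :
    PostSurjective fun x => e ∘ τ (e.symm ∘ x) := by
  intro x y hy
  obtain ⟨z, hz, hzy⟩ := hτ (e.symm ∘ x) (e.symm ∘ y) (by simpa [comp_def] using hy.comp e.symm)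
  exact ⟨e ∘ z, by simpa [comp_def] using hz.comp e, by simp [comp_def, hzy]⟩

lemma PreInjective.of_equivConj {τ : (G → A) → G → A} (e : A ≃ B)
    (hτ : PreInjective fun x => e ∘ τ (e.symm ∘ x)) : PreInjective τ := by
  intro x y hxy h
  have := hτ (e ∘ x) (e ∘ y) (hxy.comp e) (by simp [comp_def, h])
  exact e.injective.comp_left this

lemma PostInjunctive.preInjective [Group G] [Finite A] (hG : PostInjunctive G) {M : Finset G}
    {c : (M → A) → A} (hc : PostSurjective (nuca fun _ : G => c)) :
    PreInjective (nuca fun _ : G => c) :=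
  let e := Finite.equivFin A
  .of_equivConj e (hG _ _ ⟨M, fun u => e (c (e.symm ∘ u)), rfl⟩ (hc.equivConj e))

end AlphabetChange

theorem preInjective_of_uniformlyBoundedSingularity {G A : Type*} [Group G] [Group.FG G]
    [Infinite G] [Finite A] {M : Finset G} (hG : PostInjunctive G) {s : G → (M → A) → A}
    (hubs : UniformlyBoundedSingularity s) (hpost : StablyPostSurjective s) :
    PreInjective (nuca s) := by
  obtain ⟨V, hV⟩ := exists_hasLocalCorrections hpost
  obtain ⟨c, hc, hsc⟩ := exists_const_mem_orbitClosure_agreesOnShells hubs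
  have hcbij : Bijective (nuca fun _ : G => c) :=
    ⟨injective_of_preInjective (hV _ hc) (hG.preInjective (hpost _ hc)), (hpost _ hc).surjective⟩
  obtain ⟨N, t, ht⟩ :=
    stablyInvertible_of_bijective (s := fun _ : G => c) fun p hp =>
      eq_of_mem_orbitClosure_const hp ▸ hcbij
  obtain ⟨q, -, hcq, hqc⟩ := ht _ (self_mem_orbitClosure _)
  exact preInjective_of_agreesOnShells hsc hcq hqc (hV s (self_mem_orbitClosure s)) (hV _ hc)

/-- Theorem D: over a finitely generated post-injunctive group
universe and a finite alphabet, every stably post-surjective NUCA with finite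
memory whose configuration of local defining maps has uniformly bounded
singularity is stably invertible. -/
theorem theoremD {G : Type*} [Group G] [Group.FG G] (hG : PostInjunctive G)
    {A : Type*} [Fintype A] {M : Finset G} (s : G → ((M → A) → A))
    (hubs : UniformlyBoundedSingularity s) (hpost : StablyPostSurjective s) :
    StablyInvertible s := by
  obtain ⟨V, hV⟩ := exists_hasLocalCorrections hpost
  have hpre : PreInjective (nuca s) := by
    cases finite_or_infinite G
    · have hsurj : Surjective (nuca s) := (hpost s (self_mem_orbitClosure s)).surjective
      exact fun x y _ hxy => Finite.injective_iff_surjective.mpr hsurj hxy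
    · exact preInjective_of_uniformlyBoundedSingularity hG hubs hpost
  exact stablyInvertible_of_bijective fun p hp =>
    ⟨injective_of_preInjective (hV p hp) (hpre.of_mem_orbitClosure hp), (hpost p hp).surjective⟩
end

section
/- Let G be a countable group and let A be a finite-dimensional vector space over a finite field (so A is a finite vector space alphabet). Then the following two statements are equivalent: (1) for every finite subset M ⊆ G and every configuration s ∈ S^G of linear local defining maps (S the set of linear maps A^M → A) with uniformly bounded singularity, if the linear NUCA σ_s is stably injective then σ_s is stably invertible; (2) for every finite subset M ⊆ G and every configuration s ∈ S^G of linear local defining maps with uniformly bounded singularity, if the linear NUCA σ_s is stably post-surjective then σ_s is stably invertible. -/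
open Function Set Pointwise

section Linear

variable {G : Type*} [Group G] {K : Type*} [Field K]
  {A : Type*} [AddCommGroup A] [Module K A]

/-- The linear NUCA `σ_s` determined by a configuration `s` of linear local
defining maps. -/
def nucaL {M : Finset G} (s : G → ((M → A) →ₗ[K] A)) : (G → A) → (G → A) :=
  fun x g => s g fun m => x (g * (m : G))

/-- A linear NUCA is stably injective if `σ_p` is injective for all `p ∈ Σ(s)`. -/
def StablyInjectiveL {M : Finset G} (s : G → ((M → A) →ₗ[K] A)) : Prop :=
  ∀ p ∈ orbitClosure s, Function.Injective (nucaL p)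

/-- A linear NUCA is stably post-surjective if `σ_p` is post-surjective for all
`p ∈ Σ(s)`. -/
def StablyPostSurjectiveL {M : Finset G} (s : G → ((M → A) →ₗ[K] A)) : Prop :=
  ∀ p ∈ orbitClosure s, PostSurjective (nucaL p)

/-- A linear NUCA is stably invertible. -/
def StablyInvertibleL {M : Finset G} (s : G → ((M → A) →ₗ[K] A)) : Prop :=
  ∃ (N : Finset G) (t : G → ((N → A) → A)),
    ∀ p ∈ orbitClosure s, ∃ q ∈ orbitClosure t,
      nucaL p ∘ nuca q = id ∧ nuca q ∘ nucaL p = id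

end Linear


/-!
A symmetric isomorphism `e : A ≃ Dual A` gives a pairing `⟪y, x⟫ = ∑ g, e (y g) (x g)` of
configurations, one of them finitely supported. Every linear NUCA `σ_s` has an adjoint `σ_{s*}`,
again a linear NUCA (memory `M⁻¹`), with `⟪y, σ_s x⟫ = ⟪σ_{s*} y, x⟫`, and passing to the
adjoint exchanges post-surjectivity and injectivity: post-surjectivity of `σ_p` yields finitely
supported preimages of the `Pi.single g a`, so `σ_{p*}` is injective; conversely, by compactness
an injective `σ_p` determines `x` on a finite window from `σ_p x` on a larger finite window, and
linear algebra on that window solves `σ_{p*} W = δ` for finitely supported `δ`.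
As `s ↦ s*` is continuous and shift-equivariant, it maps `Σ(s)` onto `Σ(s*)`; it also preserves
uniformly bounded singularity, so either question for `s*` answers the other for `s`. Finally an
inverse of `σ_{s*}` is linear, its adjoint inverts `σ_{s**} = σ_s`, and a single NUCA inverse
suffices for stable invertibility, since being mutually inverse is a closed shift-invariant
condition on pairs of configurations.
-/

open scoped Classical

namespace NUCA

lemma continuous_of_eq_comp {α ι X Y : Type*} [Finite ι] [TopologicalSpace X] [DiscreteTopology X]
    [TopologicalSpace Y] {f : (α → X) → Y} (w : ι → α) (φ : (ι → X) → Y)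
    (hf : ∀ c, f c = φ (c ∘ w)) : Continuous f := by
  rw [funext hf]
  exact continuous_of_discreteTopology.comp (continuous_pi fun i => continuous_apply (w i))

lemma isClosed_setOf_eq_id {α X A : Type*} [TopologicalSpace X] [TopologicalSpace A]
    [DiscreteTopology A] {F : X → (α → A) → (α → A)} (hF : ∀ x g, Continuous fun c => F c x g) :
    IsClosed {c | F c = id} := by
  simp only [funext_iff, ofPred_forall]
  exact isClosed_iInter fun x => isClosed_iInter fun g =>
    (isClosed_discrete {x g}).preimage (hF x g)

lemma hasFiniteSupport_single {α B : Type*} [Zero B] (g : α) (b : B) :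
    (Pi.single g b : α → B).HasFiniteSupport :=
  (Set.finite_singleton g).subset Pi.support_single_subset

lemma asymptotic_iff_hasFiniteSupport_sub {α B : Type*} [AddGroup B] (x y : α → B) :
    Asymptotic x y ↔ (x - y).HasFiniteSupport := by
  refine ⟨fun ⟨Ω, h⟩ => Ω.finite_toSet.subset fun g hg => ?_, fun h => ⟨h.toFinset, fun g hg => ?_⟩⟩
  · by_contra hΩ
    exact hg (sub_eq_zero.2 (h g hΩ))
  · simpa [sub_eq_zero] using (Set.Finite.mem_toFinset h).not.1 hg

section Pairing

variable {ι K A : Type*} [Field K] [AddCommGroup A] [Module K A] (e : A ≃ₗ[K] Module.Dual K A)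

noncomputable def pairing (y x : ι → A) : K := ∑ᶠ g, e (y g) (x g)

lemma pairing_single_right (y : ι → A) (g : ι) (a : A) :
    pairing e y (Pi.single g a) = e (y g) a := by
  rw [pairing, finsum_eq_single _ g fun h hh => by simp [Pi.single_eq_of_ne hh]]
  simp

lemma eq_of_pairing_single {u v : ι → A}
    (h : ∀ g a, pairing e u (Pi.single g a) = pairing e v (Pi.single g a)) : u = v := by
  ext g
  refine e.injective (LinearMap.ext fun a => ?_)
  simpa [pairing_single_right] using h g a

lemma pairing_comm (he : ∀ a b, e a b = e b a) (y x : ι → A) : pairing e y x = pairing e x y :=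
  finsum_congr fun _ => he _ _

lemma pairing_eq_sum {y : ι → A} {Ω : Finset ι} (hy : y.support ⊆ Ω) (x : ι → A) :
    pairing e y x = ∑ g ∈ Ω, e (y g) (x g) :=
  finsum_eq_finsetSum_of_support_subset _ fun g hg => hy fun hyg => hg (by simp [hyg])

lemma exists_pairing_eq_apply_restrict (F : Finset ι) (ψ : Module.Dual K (F → A)) :
    ∃ W : ι → A, W.HasFiniteSupport ∧ ∀ x, pairing e W x = ψ fun f => x f := by
  let W (g : ι) : A := if h : g ∈ F then e.symm (ψ ∘ₗ LinearMap.single K (fun _ => A) ⟨g, h⟩) else 0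
  have hW : W.support ⊆ F := fun g hg => by_contra fun hgF => hg (dif_neg hgF)
  refine ⟨W, F.finite_toSet.subset hW, fun x => ?_⟩
  rw [pairing_eq_sum e hW, ← Finset.sum_coe_sort, ← Finset.univ_sum_single fun f : F => x f,
    map_sum]
  refine Finset.sum_congr rfl fun f _ => ?_
  simp [W]

end Pairing

variable {G : Type*} [Group G]

lemma finsum_sum_comp_mul_right {ι R : Type*} [AddCommMonoid R] (s : Finset ι) (f : ι → G → R)
    (w : ι → G) (hf : ∀ i ∈ s, (f i).HasFiniteSupport) :
    ∑ᶠ g, ∑ i ∈ s, f i g = ∑ᶠ h, ∑ i ∈ s, f i (h * w i) := by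
  rw [finsum_sum_comm s (fun g i => f i g) hf, finsum_sum_comm s (fun h i => f i (h * w i))
    fun i hi => (hf i hi).comp_of_injective (mul_left_injective (w i))]
  exact Finset.sum_congr rfl fun i _ => (finsum_comp_equiv (Equiv.mulRight (w i))).symm

section Shift

variable {S : Type*}

def shift (g : G) (s : G → S) : G → S := fun h => s (g⁻¹ * h)

@[simp] lemma shift_apply (g : G) (s : G → S) (h : G) : shift g s h = s (g⁻¹ * h) := rfl

@[simp] lemma shift_shift_inv (g : G) (s : G → S) : shift g (shift g⁻¹ s) = s := by
  ext; simp

@[simp] lemma shift_inv_shift (g : G) (s : G → S) : shift g⁻¹ (shift g s) = s := by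
  ext; simp

lemma nuca_shift {A : Type*} {M : Finset G} (s : G → ((M → A) → A)) (g : G) :
    nuca (shift g s) = shift g ∘ nuca s ∘ shift g⁻¹ := by
  ext x h; simp [nuca, mul_assoc]

lemma nuca_shift_comp_nuca_shift {A : Type*} {M N : Finset G} {s : G → ((M → A) → A)}
    {t : G → ((N → A) → A)} (h : nuca s ∘ nuca t = id) (g : G) :
    nuca (shift g s) ∘ nuca (shift g t) = id := by
  ext x : 1
  have hx : nuca s (nuca t (shift g⁻¹ x)) = shift g⁻¹ x := congrFun h _
  simp [nuca_shift, hx]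

lemma mem_orbitClosure_self (s : G → S) : s ∈ orbitClosure s :=
  @subset_closure _ (@Pi.topologicalSpace G (fun _ => S) fun _ => ⊥) _ _ ⟨1, by simp⟩

variable [TopologicalSpace S] [DiscreteTopology S]

lemma orbitClosure_eq_closure (s : G → S) :
    orbitClosure s = closure (range fun g => shift g s) := by
  rw [orbitClosure, DiscreteTopology.eq_bot (α := S)]
  congr 1
  ext p
  exact exists_congr fun g => eq_comm

lemma orbitClosure_subset {s : G → S} {C : Set (G → S)} (hC : IsClosed C)
    (hs : ∀ g, shift g s ∈ C) : orbitClosure s ⊆ C := by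
  rw [orbitClosure_eq_closure]
  exact closure_minimal (range_subset_iff.2 hs) hC

variable {T : Type*} [TopologicalSpace T] [DiscreteTopology T]

lemma image_orbitClosure [Finite S] {Θ : (G → S) → (G → T)} (hΘ : Continuous Θ)
    (hshift : ∀ g s, Θ (shift g s) = shift g (Θ s)) (s : G → S) :
    Θ '' orbitClosure s = orbitClosure (Θ s) := by
  have hrange : Θ '' range (fun g => shift g s) = range fun g => shift g (Θ s) := by
    rw [← range_comp]; simp only [Function.comp_def, hshift]
  rw [orbitClosure_eq_closure, orbitClosure_eq_closure, ← hrange]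
  exact (image_closure_subset_closure_image hΘ).antisymm
    ((isClosed_closure.isCompact.image hΘ).isClosed.closure_subset_iff.2
      (image_mono subset_closure))

lemma exists_mem_orbitClosure_prod [Finite S] [Finite T] (s : G → S) (t : G → T) {p : G → S}
    (hp : p ∈ orbitClosure s) :
    ∃ q ∈ orbitClosure t, (fun g => (p g, q g)) ∈ orbitClosure fun g => (s g, t g) := by
  have hfst := image_orbitClosure (Θ := fun (c : G → S × T) g => (c g).1)
    (continuous_pi fun g => (continuous_apply g).fst) (fun _ _ => rfl) fun g => (s g, t g)
  have hsnd := image_orbitClosure (Θ := fun (c : G → S × T) g => (c g).2)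
    (continuous_pi fun g => (continuous_apply g).snd) (fun _ _ => rfl) fun g => (s g, t g)
  obtain ⟨c, hc, rfl⟩ := hfst.symm ▸ hp
  exact ⟨_, hsnd ▸ mem_image_of_mem _ hc, hc⟩

end Shift

section Linear

variable {K : Type*} [Field K] {A : Type*} [AddCommGroup A] [Module K A] {M N : Finset G}

def nucaLinear (p : G → ((M → A) →ₗ[K] A)) : (G → A) →ₗ[K] (G → A) :=
  LinearMap.pi fun g => (p g).comp (LinearMap.pi fun m : M => LinearMap.proj (g * m))

@[simp] lemma coe_nucaLinear (p : G → ((M → A) →ₗ[K] A)) : ⇑(nucaLinear p) = nucaL p := rfl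

@[simp] lemma nucaL_zero (p : G → ((M → A) →ₗ[K] A)) : nucaL p 0 = 0 := map_zero (nucaLinear p)

lemma nucaL_eq_nuca (p : G → ((M → A) →ₗ[K] A)) : nucaL p = nuca fun g => ⇑(p g) := rfl

lemma nucaL_apply_eq_sum (p : G → ((M → A) →ₗ[K] A)) (x : G → A) (g : G) :
    nucaL p x g = ∑ m : M, p g (Pi.single m (x (g * m))) := by
  rw [← map_sum, Finset.univ_sum_single]; rfl

lemma _root_.Function.HasFiniteSupport.nucaL {x : G → A} (hx : x.HasFiniteSupport)
    (p : G → ((M → A) →ₗ[K] A)) : (nucaL p x).HasFiniteSupport := by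
  refine (Set.finite_iUnion fun m : M => hx.preimage (mul_left_injective (m : G)).injOn).subset ?_
  intro g hg
  by_contra hnot
  simp only [mem_iUnion, mem_preimage, Function.mem_support, not_exists, not_not] at hnot
  exact hg (by simp [nucaL_apply_eq_sum, hnot])

lemma exists_linear_eq_of_inverse {p : G → ((M → A) →ₗ[K] A)} {q : G → ((N → A) → A)}
    (h1 : nucaL p ∘ nuca q = id) (h2 : nuca q ∘ nucaL p = id) :
    ∃ q' : G → ((N → A) →ₗ[K] A), nuca q = nucaL q' := by
  let L := (nucaLinear p).inverse (nuca q) (congrFun h2) (congrFun h1)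
  -- `q g u` is the value at `g` of the inverse `L` on any configuration that reads `u` around `g`.
  let extend (g : G) : (N → A) →ₗ[K] (G → A) :=
    LinearMap.pi fun h => if hh : g⁻¹ * h ∈ N then LinearMap.proj ⟨g⁻¹ * h, hh⟩ else 0
  refine ⟨fun g => LinearMap.proj g ∘ₗ L ∘ₗ extend g, ?_⟩
  ext x g
  show q g _ = q g fun n => extend g (fun n' => x (g * n')) (g * n)
  congr 1
  ext n
  simp [extend]

lemma exists_forall_eq_zero_of_injective [Finite A] {p : G → ((M → A) →ₗ[K] A)}
    (hp : Function.Injective (nucaL p)) (Ω : Finset G) :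
    ∃ F : Finset G, ∀ x, (∀ g ∈ F, nucaL p x g = 0) → ∀ g ∈ Ω, x g = 0 := by
  let _ : TopologicalSpace A := ⊥
  have : DiscreteTopology A := ⟨rfl⟩
  let Z : Set (G → A) := (fun x (g : Ω) => x g) ⁻¹' {0}ᶜ
  have hZ : IsCompact Z :=
    ((isClosed_discrete _).preimage (continuous_pi fun g => continuous_apply _)).isCompact
  have hcover : Z ⊆ ⋃ g, {x | nucaL p x g ≠ 0} := by
    intro x hx
    have hσx : nucaL p x ≠ 0 := fun h0 => hx (by rw [hp (h0.trans (nucaL_zero p).symm)]; rfl)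
    simpa [funext_iff] using hσx
  obtain ⟨F, hF⟩ := hZ.elim_finite_subcover _ (fun g => (isOpen_discrete {0}ᶜ).preimage
    (continuous_of_eq_comp (f := fun x => nucaL p x g) (fun m : M => g * m) (p g) fun _ => rfl))
    hcover
  refine ⟨F, fun x hx g hgΩ => by_contra fun hg => ?_⟩
  obtain ⟨f, hf, hσ⟩ := mem_iUnion₂.1 (hF (show x ∈ Z from fun h => hg (congrFun h ⟨g, hgΩ⟩)))
  exact hσ (hx f hf)

lemma stablyInvertibleL_of_inverse [Finite A] {s : G → ((M → A) →ₗ[K] A)}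
    {t : G → ((N → A) → A)} (h1 : nucaL s ∘ nuca t = id) (h2 : nuca t ∘ nucaL s = id) :
    StablyInvertibleL s := by
  let : TopologicalSpace A := ⊥
  have : DiscreteTopology A := ⟨rfl⟩
  let : TopologicalSpace ((M → A) →ₗ[K] A) := ⊥
  have : DiscreteTopology ((M → A) →ₗ[K] A) := ⟨rfl⟩
  have : Finite ((M → A) →ₗ[K] A) := Finite.of_injective _ DFunLike.coe_injective
  let C : Set (G → ((M → A) →ₗ[K] A) × ((N → A) → A)) :=
    {c | nucaL (fun g => (c g).1) ∘ nuca (fun g => (c g).2) = id} ∩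
      {c | nuca (fun g => (c g).2) ∘ nucaL (fun g => (c g).1) = id}
  have hC : IsClosed C := by
    refine (isClosed_setOf_eq_id fun x g => ?_).inter (isClosed_setOf_eq_id fun x g => ?_)
    · exact continuous_of_eq_comp (fun o : Option M => o.elim g (g * ·))
        (fun v => (v none).1 fun m => (v (some m)).2 fun n => x (g * m * n)) fun _ => rfl
    · exact continuous_of_eq_comp (fun o : Option N => o.elim g (g * ·))
        (fun v => (v none).2 fun n => (v (some n)).1 fun m => x (g * n * m)) fun _ => rfl
  have hshift (g : G) : shift g (fun h => (s h, t h)) ∈ C :=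
    ⟨nuca_shift_comp_nuca_shift (s := fun h => ⇑(s h)) h1 g,
      nuca_shift_comp_nuca_shift (t := fun h => ⇑(s h)) h2 g⟩
  refine ⟨N, t, fun p hp => ?_⟩
  obtain ⟨q, hq, hpq⟩ := exists_mem_orbitClosure_prod s t hp
  exact ⟨q, hq, orbitClosure_subset hC hshift hpq⟩

end Linear

section Adjoint

variable {K : Type*} [Field K] {A : Type*} [AddCommGroup A] [Module K A] {M N : Finset G}
  (e : A ≃ₗ[K] Module.Dual K A)

noncomputable def localAdjoint (μ : M → ((M → A) →ₗ[K] A)) : (↥M⁻¹ → A) →ₗ[K] A :=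
  e.symm.toLinearMap ∘ₗ ∑ m : M, (μ m ∘ₗ LinearMap.single K (fun _ => A) m).dualMap ∘ₗ
    e.toLinearMap ∘ₗ LinearMap.proj ⟨(m : G)⁻¹, Finset.inv_mem_inv m.2⟩

lemma apply_localAdjoint (μ : M → ((M → A) →ₗ[K] A)) (v : ↥M⁻¹ → A) (a : A) :
    e (localAdjoint e μ v) a =
      ∑ m : M, e (v ⟨(m : G)⁻¹, Finset.inv_mem_inv m.2⟩) (μ m (Pi.single m a)) := by
  simp [localAdjoint, LinearMap.dualMap_apply]

/-- The configuration whose NUCA is the transpose of `nucaL p` for `pairing e`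
(`pairing_nucaL`). -/
noncomputable def adjoint (p : G → ((M → A) →ₗ[K] A)) : G → ((↥M⁻¹ → A) →ₗ[K] A) :=
  fun h => localAdjoint e fun m => p (h * (m : G)⁻¹)

lemma apply_nucaL_adjoint (p : G → ((M → A) →ₗ[K] A)) (y : G → A) (h : G) (a : A) :
    e (nucaL (adjoint e p) y h) a =
      ∑ m : M, e (y (h * (m : G)⁻¹)) (p (h * (m : G)⁻¹) (Pi.single m a)) :=
  apply_localAdjoint e _ _ a

theorem pairing_nucaL (p : G → ((M → A) →ₗ[K] A)) (y x : G → A)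
    (hfin : y.HasFiniteSupport ∨ x.HasFiniteSupport) :
    pairing e y (nucaL p x) = pairing e (nucaL (adjoint e p) y) x := by
  let f (m : M) (g : G) : K := e (y g) (p g (Pi.single m (x (g * m))))
  have hf : ∀ m ∈ Finset.univ, (f m).HasFiniteSupport := by
    intro m _
    rcases hfin with hy | hx
    · exact Set.Finite.subset hy fun g hg hyg => hg (by simp [f, hyg])
    · exact Set.Finite.subset (hx.comp_of_injective (mul_left_injective (m : G)))
        fun g hg hxg => hg (by simp [f, show x (g * m) = 0 from hxg])
  calc pairing e y (nucaL p x) = ∑ᶠ g, ∑ m, f m g := by simp [pairing, nucaL_apply_eq_sum, f]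
    _ = ∑ᶠ h, ∑ m, f m (h * (m : G)⁻¹) := finsum_sum_comp_mul_right _ _ _ hf
    _ = pairing e (nucaL (adjoint e p) y) x := by simp [pairing, apply_nucaL_adjoint, f]

variable {e} in
lemma nucaL_adjoint_comp_eq_id {p : G → ((M → A) →ₗ[K] A)} {q : G → ((N → A) →ₗ[K] A)}
    (h : nucaL p ∘ nucaL q = id) : nucaL (adjoint e q) ∘ nucaL (adjoint e p) = id := by
  ext y : 1
  refine eq_of_pairing_single e fun g a => ?_
  have hx := hasFiniteSupport_single g a
  calc pairing e (nucaL (adjoint e q) (nucaL (adjoint e p) y)) (Pi.single g a)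
      = pairing e (nucaL (adjoint e p) y) (nucaL q (Pi.single g a)) :=
        (pairing_nucaL e q _ _ (.inr hx)).symm
    _ = pairing e y (nucaL p (nucaL q (Pi.single g a))) :=
        (pairing_nucaL e p _ _ (.inr (hx.nucaL q))).symm
    _ = pairing e y (Pi.single g a) := by rw [← Function.comp_apply (f := nucaL p), h, id]

lemma nucaL_adjoint_adjoint (he : ∀ a b, e a b = e b a) (p : G → ((M → A) →ₗ[K] A)) :
    nucaL (adjoint e (adjoint e p)) = nucaL p := by
  ext x : 1
  refine eq_of_pairing_single e fun g a => ?_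
  have hx := hasFiniteSupport_single g a
  calc pairing e (nucaL (adjoint e (adjoint e p)) x) (Pi.single g a)
      = pairing e x (nucaL (adjoint e p) (Pi.single g a)) :=
        (pairing_nucaL e (adjoint e p) _ _ (.inr hx)).symm
    _ = pairing e (Pi.single g a) (nucaL p x) := by
        rw [pairing_comm e he, ← pairing_nucaL e p _ _ (.inl hx)]
    _ = pairing e (nucaL p x) (Pi.single g a) := pairing_comm e he _ _

lemma injective_nucaL_adjoint {p : G → ((M → A) →ₗ[K] A)} (hp : PostSurjective (nucaL p)) :
    Function.Injective (nucaL (adjoint e p)) := by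
  rw [← coe_nucaLinear, ← LinearMap.ker_eq_bot, LinearMap.ker_eq_bot']
  intro y (hy : nucaL (adjoint e p) y = 0)
  refine eq_of_pairing_single e fun g a => ?_
  obtain ⟨z, hz, hσz⟩ := hp 0 (Pi.single g a)
    ((asymptotic_iff_hasFiniteSupport_sub _ _).2 (by simpa using hasFiniteSupport_single g a))
  rw [asymptotic_iff_hasFiniteSupport_sub, sub_zero] at hz
  calc pairing e y (Pi.single g a) = pairing e (nucaL (adjoint e p) y) z := by
        rw [← hσz, pairing_nucaL e p _ _ (.inr hz)]
    _ = pairing e 0 (Pi.single g a) := by simp [hy, pairing]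

lemma exists_nucaL_adjoint_eq_of_injective [Finite A] {p : G → ((M → A) →ₗ[K] A)}
    (hp : Function.Injective (nucaL p)) {δ : G → A} (hδ : δ.HasFiniteSupport) :
    ∃ W : G → A, W.HasFiniteSupport ∧ nucaL (adjoint e p) W = δ := by
  set Ω := Set.Finite.toFinset hδ
  have hδΩ : δ.support ⊆ Ω := (Set.Finite.coe_toFinset hδ).superset
  obtain ⟨F, hF⟩ := exists_forall_eq_zero_of_injective hp Ω
  let R : (G → A) →ₗ[K] (F → A) := LinearMap.pi fun f => LinearMap.proj (f : G) ∘ₗ nucaLinear p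
  let Φ : Module.Dual K (G → A) := ∑ g ∈ Ω, e (δ g) ∘ₗ LinearMap.proj g
  have hΦ (x : G → A) : Φ x = pairing e δ x := by
    rw [pairing_eq_sum e hδΩ]
    simp [Φ]
  -- `Φ` vanishes on `ker R`, so it factors through `R`.
  have hker : Φ ∈ (LinearMap.ker R).dualAnnihilator := by
    refine (Submodule.mem_dualAnnihilator _).2 fun x hx => ?_
    have hx0 := hF x fun g hg => congrFun (LinearMap.mem_ker.1 hx) ⟨g, hg⟩
    rw [hΦ, pairing_eq_sum e hδΩ]
    exact Finset.sum_eq_zero fun g hg => by simp [hx0 g hg]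
  rw [← LinearMap.range_dualMap_eq_dualAnnihilator_ker] at hker
  obtain ⟨ψ, hψ⟩ := hker
  obtain ⟨W, hW, hWψ⟩ := exists_pairing_eq_apply_restrict e F ψ
  refine ⟨W, hW, eq_of_pairing_single e fun g a => ?_⟩
  calc pairing e (nucaL (adjoint e p) W) (Pi.single g a)
      = pairing e W (nucaL p (Pi.single g a)) :=
        (pairing_nucaL e p _ _ (.inr (hasFiniteSupport_single g a))).symm
    _ = R.dualMap ψ (Pi.single g a) := hWψ _
    _ = pairing e δ (Pi.single g a) := by rw [hψ, hΦ]

lemma postSurjective_nucaL_adjoint [Finite A] {p : G → ((M → A) →ₗ[K] A)}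
    (hp : Function.Injective (nucaL p)) : PostSurjective (nucaL (adjoint e p)) := by
  intro x y hy
  obtain ⟨W, hW, hσW⟩ :=
    exists_nucaL_adjoint_eq_of_injective e hp ((asymptotic_iff_hasFiniteSupport_sub _ _).1 hy)
  refine ⟨x + W, (asymptotic_iff_hasFiniteSupport_sub _ _).2 (by simpa using hW), ?_⟩
  rw [← coe_nucaLinear, map_add, coe_nucaLinear, hσW, add_sub_cancel]

lemma adjoint_shift (g : G) (p : G → ((M → A) →ₗ[K] A)) :
    adjoint e (shift g p) = shift g (adjoint e p) := by
  ext1 h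
  simp only [adjoint, shift_apply, mul_assoc]

lemma image_adjoint_orbitClosure [Finite A] (s : G → ((M → A) →ₗ[K] A)) :
    adjoint e '' orbitClosure s = orbitClosure (adjoint e s) := by
  let _ : TopologicalSpace ((M → A) →ₗ[K] A) := ⊥
  have : DiscreteTopology ((M → A) →ₗ[K] A) := ⟨rfl⟩
  have : Finite ((M → A) →ₗ[K] A) := Finite.of_injective _ DFunLike.coe_injective
  let _ : TopologicalSpace ((↥M⁻¹ → A) →ₗ[K] A) := ⊥
  have : DiscreteTopology ((↥M⁻¹ → A) →ₗ[K] A) := ⟨rfl⟩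
  exact image_orbitClosure (Θ := adjoint e) (continuous_pi fun h =>
    continuous_of_eq_comp (fun m : M => h * (m : G)⁻¹) (localAdjoint e) fun _ => rfl)
    (adjoint_shift e) s

lemma _root_.UniformlyBoundedSingularity.adjoint {s : G → ((M → A) →ₗ[K] A)}
    (hs : UniformlyBoundedSingularity s) : UniformlyBoundedSingularity (adjoint e s) := by
  intro E hE1 hEinv
  -- `adjoint e s` at `g` only sees `s` on `g * M⁻¹`, so enlarge `E` by `M ∪ M⁻¹` on both sides.
  set B := E ∪ M ∪ M⁻¹
  have hEB : E ⊆ B := fun x hx => by simp [B, hx]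
  have hBinv : ∀ b ∈ B, b⁻¹ ∈ B := by
    intro b hb
    simp only [B, Finset.mem_union, Finset.mem_inv', inv_inv] at hb ⊢
    rcases hb with (hb | hb) | hb
    · exact .inl (.inl (hEinv b hb))
    · exact .inr hb
    · exact .inl (.inr hb)
  have hE₂1 : (1 : G) ∈ B * B * B := by
    simpa using Finset.mul_mem_mul (Finset.mul_mem_mul (hEB hE1) (hEB hE1)) (hEB hE1)
  have hE₂inv : ∀ g ∈ B * B * B, g⁻¹ ∈ B * B * B := by
    intro g hg
    obtain ⟨_, hb₁₂, b₃, hb₃, rfl⟩ := Finset.mem_mul.1 hg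
    obtain ⟨b₁, hb₁, b₂, hb₂, rfl⟩ := Finset.mem_mul.1 hb₁₂
    simpa [mul_assoc] using
      Finset.mul_mem_mul (Finset.mul_mem_mul (hBinv b₃ hb₃) (hBinv b₂ hb₂)) (hBinv b₁ hb₁)
  obtain ⟨F, hEF, c, hc⟩ := hs _ hE₂1 hE₂inv
  have hF1 : (1 : G) ∈ F := hEF hE₂1
  refine ⟨F * B, fun x hx => by simpa using Finset.mul_mem_mul hF1 (hEB hx),
    localAdjoint e fun _ => c, ?_⟩
  rintro _ ⟨hg, hgF⟩
  simp only [Finset.coe_mul, Set.mem_mul, Finset.mem_coe] at hg hgF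
  obtain ⟨_, ⟨f, hf, b, hb, rfl⟩, x, hx, rfl⟩ := hg
  refine congrArg (localAdjoint e) (funext fun m => hc _ ⟨?_, fun hF => ?_⟩)
  · refine Set.mem_mul.2 ⟨f, hf, b * x * (m : G)⁻¹, ?_, by group⟩
    exact_mod_cast Finset.mul_mem_mul (Finset.mul_mem_mul hb (hEB hx))
      (by simp [B, Finset.inv_mem_inv m.2])
  · exact hgF ⟨_, hF, m, by simp [B], by group⟩

lemma _root_.StablyPostSurjectiveL.adjoint [Finite A] {s : G → ((M → A) →ₗ[K] A)}
    (hs : StablyPostSurjectiveL s) : StablyInjectiveL (adjoint e s) := by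
  rintro _ hp
  rw [← image_adjoint_orbitClosure] at hp
  obtain ⟨p, hp, rfl⟩ := hp
  exact injective_nucaL_adjoint e (hs p hp)

lemma _root_.StablyInjectiveL.adjoint [Finite A] {s : G → ((M → A) →ₗ[K] A)}
    (hs : StablyInjectiveL s) : StablyPostSurjectiveL (adjoint e s) := by
  rintro _ hp
  rw [← image_adjoint_orbitClosure] at hp
  obtain ⟨p, hp, rfl⟩ := hp
  exact postSurjective_nucaL_adjoint e (hs p hp)

lemma stablyInvertibleL_of_adjoint [Finite A] (he : ∀ a b, e a b = e b a)
    {s : G → ((M → A) →ₗ[K] A)} (hs : StablyInvertibleL (adjoint e s)) : StablyInvertibleL s := by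
  obtain ⟨N, t, ht⟩ := hs
  obtain ⟨q, -, h1, h2⟩ := ht _ (mem_orbitClosure_self _)
  obtain ⟨q', hq'⟩ := exists_linear_eq_of_inverse h1 h2
  rw [hq'] at h1 h2
  refine stablyInvertibleL_of_inverse (t := fun g => ⇑(adjoint e q' g)) ?_ ?_
  · rw [← nucaL_eq_nuca, ← nucaL_adjoint_adjoint e he s]
    exact nucaL_adjoint_comp_eq_id h2
  · rw [← nucaL_eq_nuca, ← nucaL_adjoint_adjoint e he s]
    exact nucaL_adjoint_comp_eq_id h1

end Adjoint

lemma exists_dualEquiv_symm (K A : Type*) [Field K] [AddCommGroup A] [Module K A]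
    [FiniteDimensional K A] : ∃ e : A ≃ₗ[K] Module.Dual K A, ∀ a b, e a b = e b a := by
  let b := Module.finBasis K A
  have hflip : b.toDual.flip = b.toDual :=
    b.ext fun i => b.ext fun j => by simp [Module.Basis.toDual_apply, eq_comm]
  exact ⟨b.toDualEquiv, fun x y => by simpa using LinearMap.congr_fun₂ hflip y x⟩

end NUCA

theorem linear_questions_equivalent_general {G : Type*} [Group G]
    {K : Type*} [Field K] [Fintype K]
    {A : Type*} [AddCommGroup A] [Module K A] [FiniteDimensional K A] :
    (∀ (M : Finset G) (s : G → ((M → A) →ₗ[K] A)),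
        UniformlyBoundedSingularity s → StablyInjectiveL s → StablyInvertibleL s) ↔
    (∀ (M : Finset G) (s : G → ((M → A) →ₗ[K] A)),
        UniformlyBoundedSingularity s → StablyPostSurjectiveL s → StablyInvertibleL s) := by
  have : Finite A := Module.finite_of_finite K
  obtain ⟨e, he⟩ := NUCA.exists_dualEquiv_symm K A
  constructor
  · intro H M s hs hps
    exact NUCA.stablyInvertibleL_of_adjoint e he (H _ _ (hs.adjoint e) (hps.adjoint e))
  · intro H M s hs hsi
    exact NUCA.stablyInvertibleL_of_adjoint e he (H _ _ (hs.adjoint e) (hsi.adjoint e))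

/-- over a countable group and a finite-dimensional vector space
alphabet over a finite field, Question 1 (stable injectivity implies stable
invertibility) has an affirmative answer for all linear NUCA with finite memory
and uniformly bounded singularity iff Question 2 (stable post-surjectivity
implies stable invertibility) does. -/
theorem linear_questions_equivalent {G : Type*} [Group G] [Countable G]
    {K : Type*} [Field K] [Fintype K]
    {A : Type*} [AddCommGroup A] [Module K A] [FiniteDimensional K A] :
    (∀ (M : Finset G) (s : G → ((M → A) →ₗ[K] A)),
        UniformlyBoundedSingularity s → StablyInjectiveL s → StablyInvertibleL s) ↔
    (∀ (M : Finset G) (s : G → ((M → A) →ₗ[K] A)),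
        UniformlyBoundedSingularity s → StablyPostSurjectiveL s → StablyInvertibleL s) :=
  linear_questions_equivalent_general
end

section
/- Let G be an infinite finitely generated group, A a finite alphabet, M ⊆ G a finite subset, and S = A^(A^M). If s ∈ S^G has uniformly bounded singularity, then the orbit closure Σ(s) contains a constant configuration c ∈ S^G. -/
open Function Set Pointwise

/-!
Given a finite window `K`, enlarge `K` to a finite symmetric generating set `E ∋ 1` and apply
the singularity condition to `E³`, obtaining `F`. As `G` is infinite, the finite set `FE` is
not stable under right multiplication by `E`, and any `x ∈ FE² ∖ FE` satisfies
`xK ⊆ FE³ ∖ F`, so `s` is constant on the translate `xK`. Since `S` is finite, one value `c`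
works for every window, which says exactly that the constant configuration `c` lies in `Σ(s)`.
-/

section

variable {G : Type*} [Group G]

theorem not_mul_subset_self_of_finite [Infinite G] {E X : Set G}
    (hE : Subgroup.closure E = ⊤) (hEinv : E⁻¹ ⊆ E) (hX : X.Finite) (hXne : X.Nonempty) :
    ¬ X * E ⊆ X := by
  intro hXE
  obtain ⟨x₀, hx₀⟩ := hXne
  have hstable : ∀ g, ∀ x ∈ X, x * g ∈ X := by
    intro g
    induction (hE ▸ Subgroup.mem_top g : g ∈ Subgroup.closure E)
      using Subgroup.closure_induction'' with
    | mem e he => exact fun x hx => hXE (mul_mem_mul hx he)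
    | inv_mem e he => exact fun x hx => hXE (mul_mem_mul hx (hEinv (inv_mem_inv.mpr he)))
    | one => simp
    | mul a b _ _ ha hb => exact fun x hx => mul_assoc x a b ▸ hb _ (ha x hx)
  have hXuniv : X = univ := eq_univ_of_forall fun g => by
    simpa using hstable (x₀⁻¹ * g) x₀ hx₀
  exact infinite_univ (hXuniv ▸ hX)

theorem UniformlyBoundedSingularity.exists_const_on_translate [Infinite G] [Group.FG G]
    {S : Type*} {s : G → S} (hs : UniformlyBoundedSingularity s) (K : Finset G) :
    ∃ c x, ∀ k ∈ K, s (x * k) = c := by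
  classical
  obtain ⟨T, hT⟩ := Group.FG.out (G := G)
  set E₀ : Finset G := insert 1 (K ∪ T)
  set E : Finset G := E₀ ∪ E₀⁻¹
  have hEinv : (E : Set G)⁻¹ = E := by
    simp only [E, Finset.coe_union, Finset.coe_inv, Set.union_inv, inv_inv, Set.union_comm]
  have hE₀E : E₀ ⊆ E := Finset.subset_union_left
  have hE : Subgroup.closure (E : Set G) = ⊤ :=
    top_unique (hT ▸ Subgroup.closure_mono fun t ht => hE₀E (by simp [E₀, Finset.mem_coe.mp ht]))
  have hKE : K ⊆ E := fun k hk => hE₀E (by simp [E₀, hk])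
  have h1E : (1 : G) ∈ E := hE₀E (by simp [E₀])
  have h1E₃ : (1 : G) ∈ E * E * E := by
    simpa using Finset.mul_mem_mul (Finset.mul_mem_mul h1E h1E) h1E
  obtain ⟨F, hEF, c, hc⟩ := hs (E * E * E) h1E₃
    (fun g hg => by
      rw [← Finset.mem_coe, Finset.coe_mul, Finset.coe_mul] at hg ⊢
      simpa [mul_inv_rev, hEinv, mul_assoc] using inv_mem_inv.mpr hg)
  have hFE : ((F : Set G) * E).Nonempty := ⟨1 * 1, mul_mem_mul (hEF h1E₃) h1E⟩
  obtain ⟨x, hx, hxF⟩ := not_subset.mp <|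
    not_mul_subset_self_of_finite hE hEinv.le (F.finite_toSet.mul E.finite_toSet) hFE
  refine ⟨c, x, fun k hk => hc _ ⟨?_, fun hxk => hxF ?_⟩⟩
  · rw [Finset.coe_mul, Finset.coe_mul, ← mul_assoc, ← mul_assoc]
    exact mul_mem_mul hx (hKE hk)
  · simpa using mul_mem_mul hxk (hEinv.le (inv_mem_inv.mpr (Finset.mem_coe.mpr (hKE hk))))

theorem mem_orbitClosure_of_forall_finset {S : Type*} {s p : G → S}
    (h : ∀ K : Finset G, ∃ x, ∀ k ∈ K, s (x * k) = p k) : p ∈ orbitClosure s := by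
  let : TopologicalSpace S := ⊥
  refine mem_closure_iff.mpr fun o ho hpo => ?_
  obtain ⟨I, u, hu, hIu⟩ := isOpen_pi_iff.mp ho p hpo
  obtain ⟨x, hx⟩ := h I
  refine ⟨_, hIu fun i hi => ?_, x⁻¹, rfl⟩
  simpa [hx i hi] using (hu i hi).2

end

theorem exists_forall_of_forall_exists_of_antitone {ι S : Type*} [Finite S]
    {P : S → Finset ι → Prop} (hP : ∀ c, Antitone (P c)) (h : ∀ K, ∃ c, P c K) :
    ∃ c, ∀ K, P c K := by
  classical
  have := Fintype.ofFinite S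
  by_contra! hne
  choose K hK using hne
  obtain ⟨c, hc⟩ := h (Finset.univ.biUnion K)
  exact hK c (hP c (Finset.subset_biUnion_of_mem K (Finset.mem_univ c)) hc)

/-- over an infinite finitely generated group and a finite
alphabet, the orbit closure of any configuration with uniformly bounded
singularity contains a constant configuration. -/
theorem constant_mem_orbitClosure_of_ubs {G A : Type*} [Group G] [Infinite G]
    [Group.FG G] [Fintype A] {M : Finset G} (s : G → ((M → A) → A))
    (hubs : UniformlyBoundedSingularity s) :
    ∃ c : (M → A) → A, (fun _ : G => c) ∈ orbitClosure s := by
  obtain ⟨c, hc⟩ := exists_forall_of_forall_exists_of_antitone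
    (P := fun c K => ∃ x, ∀ k ∈ K, s (x * k) = c)
    (fun _ _ _ hKL ⟨x, hx⟩ => ⟨x, fun k hk => hx k (hKL hk)⟩)
    hubs.exists_const_on_translate
  exact ⟨c, mem_orbitClosure_of_forall_finset hc⟩
end

section
/- Let G be a group, A an alphabet, K ⊆ G a finite subset with 1_G ∈ K, and Q = A^(A^K). Let π : A^K → A be the projection z ↦ z(1_G). Let q ∈ Q^G and let F ⊆ G be a finite subset such that q(g) = π for all g ∈ G ∖ F, and set E = FK. Then: (a) σ_q(x)(g) = x(g) for every x ∈ A^G and every g ∈ G ∖ F; (b) if x, y ∈ A^G satisfy x|_E = y|_E, then σ_q(x)|_E = σ_q(y)|_E. Consequently there exists a map Φ : A^E → A^E such that for every x ∈ A^G, σ_q(x)|_E = Φ(x|_E) and σ_q(x)|_{G∖E} = x|_{G∖E}; that is, σ_q decomposes as Φ × Id_{A^{G∖E}}. -/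
open Function Set Pointwise

section Decomposition

variable {G A : Type*}

/-- `Φ u e` evaluates `τ` at `e` on an extension of `u` to `G`; extending by `u e` itself
rather than by a fixed letter avoids assuming `A` nonempty. -/
theorem exists_factor_of_eqOn {E : Set G} {τ : (G → A) → (G → A)}
    (hτ : ∀ x y, EqOn x y E → EqOn (τ x) (τ y) E) :
    ∃ Φ : (E → A) → (E → A), ∀ x : G → A, ∀ g (hg : g ∈ E),
      τ x g = Φ (fun e => x e) ⟨g, hg⟩ := by
  refine ⟨fun u e => τ (extend Subtype.val u fun _ => u e) e, fun x g hg => hτ _ _ ?_ hg⟩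
  intro h hh
  exact (Subtype.val_injective.extend_apply (fun e : E => x e) _ ⟨h, hh⟩).symm

variable [Group G] {K : Finset G}

theorem nuca_apply_of_eq_proj (h1 : (1 : G) ∈ K) {q : G → ((K → A) → A)} {g : G}
    (hg : q g = fun z => z ⟨1, h1⟩) (x : G → A) : nuca q x g = x g := by
  simp [nuca, hg]

theorem nuca_apply_congr_s12 (q : G → ((K → A) → A)) {x y : G → A} {g : G}
    (h : ∀ k ∈ K, x (g * k) = y (g * k)) : nuca q x g = nuca q y g :=
  congrArg (q g) (funext fun m => h m m.2)

theorem nuca_eqOn_mul_of_eqOn (h1 : (1 : G) ∈ K) {q : G → ((K → A) → A)} {F : Finset G}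
    (hq : ∀ g ∉ F, q g = fun z => z ⟨1, h1⟩) {x y : G → A}
    (hxy : EqOn x y ((F : Set G) * (K : Set G))) :
    EqOn (nuca q x) (nuca q y) ((F : Set G) * (K : Set G)) := by
  intro g hg
  by_cases hF : g ∈ F
  · exact nuca_apply_congr_s12 q fun k hk => hxy (Set.mul_mem_mul hF hk)
  · rw [nuca_apply_of_eq_proj h1 (hq g hF), nuca_apply_of_eq_proj h1 (hq g hF), hxy hg]

end Decomposition

/-- if `q(g)` is the projection `π : z ↦ z(1)` outside a finite
set `F`, and `E = FK`, then (a) `σ_q(x)(g) = x(g)` for `g ∉ F`; (b) `σ_q(x)|_E`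
only depends on `x|_E`; consequently `σ_q` decomposes as `Φ × Id_{A^{G∖E}}`. -/
theorem nuca_decomposition {G A : Type*} [Group G]
    (K : Finset G) (h1 : (1 : G) ∈ K)
    (q : G → ((K → A) → A)) (F : Finset G)
    (hq : ∀ g ∉ F, q g = fun z => z ⟨1, h1⟩) :
    (∀ (x : G → A), ∀ g ∉ F, nuca q x g = x g) ∧
    (∀ x y : G → A, (∀ g ∈ (F : Set G) * (K : Set G), x g = y g) →
      ∀ g ∈ (F : Set G) * (K : Set G), nuca q x g = nuca q y g) ∧
    ∃ Φ : (((F : Set G) * (K : Set G) : Set G) → A) →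
          (((F : Set G) * (K : Set G) : Set G) → A),
      ∀ x : G → A,
        (∀ g (hg : g ∈ (F : Set G) * (K : Set G)),
          nuca q x g = Φ (fun e => x e) ⟨g, hg⟩) ∧
        (∀ g ∉ (F : Set G) * (K : Set G), nuca q x g = x g) := by
  have hid : ∀ (x : G → A), ∀ g ∉ F, nuca q x g = x g :=
    fun x g hg => nuca_apply_of_eq_proj h1 (hq g hg) x
  have hloc : ∀ x y : G → A, EqOn x y ((F : Set G) * (K : Set G)) →
      EqOn (nuca q x) (nuca q y) ((F : Set G) * (K : Set G)) :=
    fun _ _ => nuca_eqOn_mul_of_eqOn h1 hq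
  obtain ⟨Φ, hΦ⟩ := exists_factor_of_eqOn hloc
  have hF : (F : Set G) ⊆ (F : Set G) * (K : Set G) := Set.subset_mul_left _ h1
  exact ⟨hid, hloc, Φ, fun x => ⟨hΦ x, fun g hg => hid x g fun hgF => hg (hF hgF)⟩⟩
end
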